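/- arXiv:2301.13075 — 2 statements merged into one kernel-verified Lean document; each statement's English description precedes it below -/
import Mathlib

section
/- Let H be a complex Hilbert space, T > 0, and let Ĥ, V̂ : ℝ → (H →L[ℂ] H) be continuous families of bounded self-adjoint operators. Let ψ, φ : ℝ → H be differentiable with ψ'(t) = -i·Ĥ(t)(ψ(t)) and φ'(t) = -i·(Ĥ(t) + V̂(t))(φ(t)) for all t ∈ [0,T], and suppose ψ(0) = φ(0). Then ‖ψ(T) - φ(T)‖ ≤ ∫₀^T ‖V̂(t)(φ(t))‖ dt. -/
/-!
Write `δ = ψ - φ`, so that `δ' = -i Ĥ δ + i V̂ φ` and `δ(0) = 0`. Since `Ĥ(t)` is self-adjoint,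
`-i Ĥ(t)` is skew-adjoint and drops out of `d/dt ‖δ‖² = 2 Re ⟪δ, δ'⟫`, leaving
`Re ⟪δ, δ'⟫ ≤ ‖δ‖ ‖V̂ φ‖`, i.e. `‖δ‖' ≤ ‖V̂ φ‖` wherever `δ ≠ 0`. To avoid the points where `‖δ‖`
is not differentiable, this estimate is run on `√(‖δ‖² + ε²)` and then `ε → 0`.
-/

open MeasureTheory Set
open scoped InnerProductSpace RealInnerProductSpace

section EnergyEstimate

variable {F : Type*} [NormedAddCommGroup F] [InnerProductSpace ℝ F]

theorem HasDerivAt.sqrt_norm_sq_add {f : ℝ → F} {f' : F} {t c : ℝ} (hf : HasDerivAt f f' t)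
    (hc : 0 < c) :
    HasDerivAt (fun s => √(‖f s‖ ^ 2 + c)) (⟪f t, f'⟫_ℝ / √(‖f t‖ ^ 2 + c)) t := by
  convert (hf.norm_sq.add_const c).sqrt (by positivity) using 1
  field_simp

theorem sqrt_norm_sq_add_sub_le_integral {f f' : ℝ → F} {w : ℝ → ℝ} {a b c : ℝ} (hab : a ≤ b)
    (hc : 0 < c) (hf : ContinuousOn f (Icc a b)) (hderiv : ∀ t ∈ Ioo a b, HasDerivAt f (f' t) t)
    (hw : IntegrableOn w (Icc a b)) (hw_nonneg : ∀ t ∈ Ioo a b, 0 ≤ w t)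
    (hbound : ∀ t ∈ Ioo a b, ⟪f t, f' t⟫_ℝ ≤ ‖f t‖ * w t) :
    √(‖f b‖ ^ 2 + c) - √(‖f a‖ ^ 2 + c) ≤ ∫ t in a..b, w t := by
  refine intervalIntegral.sub_le_integral_of_hasDeriv_right_of_le hab
    ((hf.norm.pow 2).add continuousOn_const).sqrt
    (fun t ht => ((hderiv t ht).sqrt_norm_sq_add hc).hasDerivWithinAt) hw fun t ht => ?_
  have hpos : 0 < √(‖f t‖ ^ 2 + c) := Real.sqrt_pos.2 (by positivity)
  have hnorm_le : ‖f t‖ ≤ √(‖f t‖ ^ 2 + c) :=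
    Real.le_sqrt_of_sq_le (le_add_of_nonneg_right hc.le)
  rw [div_le_iff₀ hpos]
  calc ⟪f t, f' t⟫_ℝ ≤ ‖f t‖ * w t := hbound t ht
    _ ≤ √(‖f t‖ ^ 2 + c) * w t := mul_le_mul_of_nonneg_right hnorm_le (hw_nonneg t ht)
    _ = w t * √(‖f t‖ ^ 2 + c) := mul_comm _ _

theorem norm_le_add_integral_of_inner_deriv_le {f f' : ℝ → F} {w : ℝ → ℝ} {a b : ℝ}
    (hab : a ≤ b) (hf : ContinuousOn f (Icc a b)) (hderiv : ∀ t ∈ Ioo a b, HasDerivAt f (f' t) t)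
    (hw : IntegrableOn w (Icc a b)) (hw_nonneg : ∀ t ∈ Ioo a b, 0 ≤ w t)
    (hbound : ∀ t ∈ Ioo a b, ⟪f t, f' t⟫_ℝ ≤ ‖f t‖ * w t) :
    ‖f b‖ ≤ ‖f a‖ + ∫ t in a..b, w t := by
  refine le_of_forall_pos_le_add fun ε hε => ?_
  have hsub := sqrt_norm_sq_add_sub_le_integral hab (pow_pos hε 2) hf hderiv hw hw_nonneg hbound
  have hb : ‖f b‖ ≤ √(‖f b‖ ^ 2 + ε ^ 2) :=
    Real.le_sqrt_of_sq_le (le_add_of_nonneg_right (sq_nonneg ε))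
  have ha : √(‖f a‖ ^ 2 + ε ^ 2) ≤ ‖f a‖ + ε :=
    (Real.sqrt_le_left (by positivity)).2 (by nlinarith [norm_nonneg (f a)])
  linarith

end EnergyEstimate

section Schrodinger

variable {H : Type*} [NormedAddCommGroup H] [InnerProductSpace ℂ H] [CompleteSpace H]

theorem IsSelfAdjoint.re_inner_I_smul_apply_self {A : H →L[ℂ] H} (hA : IsSelfAdjoint A) (x : H) :
    (⟪x, Complex.I • A x⟫_ℂ).re = 0 := by
  simpa [inner_smul_right] using hA.isSymmetric.im_inner_self_apply x

theorem re_inner_neg_I_smul_apply_add_I_smul_le {A : H →L[ℂ] H} (hA : IsSelfAdjoint A) (x y : H) :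
    (⟪x, (-Complex.I) • A x + Complex.I • y⟫_ℂ).re ≤ ‖x‖ * ‖y‖ := by
  rw [inner_add_right, neg_smul, inner_neg_right, Complex.add_re, Complex.neg_re,
    hA.re_inner_I_smul_apply_self, neg_zero, zero_add]
  calc (⟪x, Complex.I • y⟫_ℂ).re ≤ ‖⟪x, Complex.I • y⟫_ℂ‖ := Complex.re_le_norm _
    _ ≤ ‖x‖ * ‖Complex.I • y‖ := norm_inner_le_norm _ _
    _ = ‖x‖ * ‖y‖ := by rw [norm_smul, Complex.norm_I, one_mul]

end Schrodinger

theorem dist_final_states_le_integral_norm_apply_general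
    {H : Type*} [NormedAddCommGroup H] [InnerProductSpace ℂ H] [CompleteSpace H]
    (T : ℝ) (hT : 0 < T)
    (Hop V : ℝ → (H →L[ℂ] H))
    (hVcont : Continuous V)
    (hHsa : ∀ t, IsSelfAdjoint (Hop t))
    (ψ φ : ℝ → H)
    (hψ : ∀ t ∈ Set.Icc (0 : ℝ) T, HasDerivAt ψ ((-Complex.I) • (Hop t) (ψ t)) t)
    (hφ : ∀ t ∈ Set.Icc (0 : ℝ) T, HasDerivAt φ ((-Complex.I) • ((Hop t + V t) (φ t))) t)
    (h0 : ψ 0 = φ 0) :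
    ‖ψ T - φ T‖ ≤ ∫ t in (0 : ℝ)..T, ‖(V t) (φ t)‖ := by
  -- Its real inner product is `re ⟪·, ·⟫_ℂ` by definition, which is how the last bound is passed.
  let : InnerProductSpace ℝ H := InnerProductSpace.complexToReal
  have hderiv : ∀ t ∈ Icc 0 T, HasDerivAt (ψ - φ)
      ((-Complex.I) • Hop t ((ψ - φ) t) + Complex.I • V t (φ t)) t := fun t ht => by
    convert (hψ t ht).sub (hφ t ht) using 1
    simp only [Pi.sub_apply, map_sub, add_apply]
    module
  have hφcont : ContinuousOn φ (Icc 0 T) := fun t ht => (hφ t ht).continuousAt.continuousWithinAt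
  have hcont : ContinuousOn (ψ - φ) (Icc 0 T) :=
    fun t ht => (hderiv t ht).continuousAt.continuousWithinAt
  have hbound := norm_le_add_integral_of_inner_deriv_le hT.le hcont
    (fun t ht => hderiv t (Ioo_subset_Icc_self ht))
    ((hVcont.continuousOn.clm_apply hφcont).norm.integrableOn_compact isCompact_Icc)
    (fun t _ => norm_nonneg _)
    (fun t _ => re_inner_neg_I_smul_apply_add_I_smul_le (hHsa t) _ _)
  simpa [h0] using hbound

/-- Intermediate bound in the proof of Theorem 1: the distance between the final
states is bounded by the time integral of `‖V(t) φ(t)‖`. -/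
theorem dist_final_states_le_integral_norm_apply
    {H : Type*} [NormedAddCommGroup H] [InnerProductSpace ℂ H] [CompleteSpace H]
    (T : ℝ) (hT : 0 < T)
    (Hop V : ℝ → (H →L[ℂ] H))
    (hHcont : Continuous Hop) (hVcont : Continuous V)
    (hHsa : ∀ t, IsSelfAdjoint (Hop t)) (hVsa : ∀ t, IsSelfAdjoint (V t))
    (ψ φ : ℝ → H)
    (hψ : ∀ t ∈ Set.Icc (0 : ℝ) T, HasDerivAt ψ ((-Complex.I) • (Hop t) (ψ t)) t)
    (hφ : ∀ t ∈ Set.Icc (0 : ℝ) T, HasDerivAt φ ((-Complex.I) • ((Hop t + V t) (φ t))) t)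
    (h0 : ψ 0 = φ 0) :
    ‖ψ T - φ T‖ ≤ ∫ t in (0 : ℝ)..T, ‖(V t) (φ t)‖ :=
  dist_final_states_le_integral_norm_apply_general T hT Hop V hVcont hHsa ψ φ hψ hφ h0
end

section
/- Let H be a complex Hilbert space, T > 0, and let Ĥ, V̂ : ℝ → (H →L[ℂ] H) be continuous families of bounded self-adjoint operators with v := ∫₀^T ‖V̂(t)‖ dt < √2. Let ψ, φ : ℝ → H be differentiable with ψ'(t) = -i·Ĥ(t)(ψ(t)) and φ'(t) = -i·(Ĥ(t) + V̂(t))(φ(t)) for all t ∈ [0,T], and suppose ψ(0) = φ(0) with ‖ψ(0)‖ = 1. Then Re⟨ψ(T), φ(T)⟩ ≥ 1 - v²/2 > 0, i.e. the two final states have non-zero overlap. -/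
/-! Put `e = ψ - φ`. Self-adjointness makes the Hamiltonian part of `e'` orthogonal to `e` and
conserves `‖φ‖ = 1`, so `d/dt ‖e‖² = 2 Re⟨e, i V φ⟩ ≤ 2 ‖V‖ ‖e‖`: the norm of `e` grows at rate
at most `‖V‖`, whence `‖ψ(T) - φ(T)‖ ≤ v`. Since `‖e‖` need not be differentiable where `e`
vanishes, the comparison is run on `√(‖e‖² + ε²)` and `ε → 0`. For unit vectors,
`Re⟨ψ(T), φ(T)⟩ = 1 - ‖ψ(T) - φ(T)‖² / 2`. -/

open Set Complex
open scoped InnerProductSpace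

section

variable {E : Type*} [NormedAddCommGroup E] [InnerProductSpace ℂ E]

theorem HasDerivWithinAt.norm_sq_complex {e : ℝ → E} {e' : E} {s : Set ℝ} {x : ℝ}
    (he : HasDerivWithinAt e e' s x) :
    HasDerivWithinAt (‖e ·‖ ^ 2) (2 * (⟪e x, e'⟫_ℂ).re) s x := by
  let := InnerProductSpace.complexToReal (G := E)
  exact he.norm_sq

theorem sqrt_norm_sq_add_sq_le_of_re_inner_deriv_le {e e' : ℝ → E} {c : ℝ → ℝ} {a b ε : ℝ}
    (hε : 0 < ε) (he : ContinuousOn e (Icc a b))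
    (he' : ∀ x ∈ Ico a b, HasDerivWithinAt e (e' x) (Ici x) x)
    (hc : Continuous c) (hc0 : ∀ x ∈ Ico a b, 0 ≤ c x)
    (bound : ∀ x ∈ Ico a b, (⟪e x, e' x⟫_ℂ).re ≤ c x * ‖e x‖) :
    ∀ x ∈ Icc a b, √(‖e x‖ ^ 2 + ε ^ 2) ≤ √(‖e a‖ ^ 2 + ε ^ 2) + ∫ t in a..x, c t := by
  set u : ℝ → ℝ := fun x => √(‖e x‖ ^ 2 + ε ^ 2)
  have hu_pos : ∀ x, 0 < u x := fun x => Real.sqrt_pos.2 (by positivity)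
  have hnorm_le_u : ∀ x, ‖e x‖ ≤ u x := fun x =>
    (Real.le_sqrt (norm_nonneg _) (by positivity)).2 (by nlinarith)
  have hprim : ∀ x, HasDerivAt (fun x => u a + ∫ t in a..x, c t) (c x) x := fun x =>
    ((hc.integral_hasStrictDerivAt a x).hasDerivAt.const_add _)
  refine image_le_of_deriv_right_le_deriv_boundary
    (f' := fun x => 2 * (⟪e x, e' x⟫_ℂ).re / (2 * u x))
    (((he.norm.pow 2).add continuousOn_const).sqrt)
    (fun x hx => ((he' x hx).norm_sq_complex.add_const (ε ^ 2)).sqrt (by positivity))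
    (by simp) (fun x _ => (hprim x).continuousAt.continuousWithinAt)
    (fun x _ => (hprim x).hasDerivWithinAt) fun x hx => ?_
  rw [mul_div_mul_left _ _ two_ne_zero, div_le_iff₀ (hu_pos x)]
  exact (bound x hx).trans (mul_le_mul_of_nonneg_left (hnorm_le_u x) (hc0 x hx))

theorem norm_le_add_integral_of_re_inner_deriv_le {e e' : ℝ → E} {c : ℝ → ℝ} {a b : ℝ}
    (he : ContinuousOn e (Icc a b))
    (he' : ∀ x ∈ Ico a b, HasDerivWithinAt e (e' x) (Ici x) x)
    (hc : Continuous c) (hc0 : ∀ x ∈ Ico a b, 0 ≤ c x)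
    (bound : ∀ x ∈ Ico a b, (⟪e x, e' x⟫_ℂ).re ≤ c x * ‖e x‖) :
    ∀ x ∈ Icc a b, ‖e x‖ ≤ ‖e a‖ + ∫ t in a..x, c t := by
  intro x hx
  refine le_of_forall_pos_le_add fun ε hε => ?_
  calc ‖e x‖ ≤ √(‖e x‖ ^ 2 + ε ^ 2) :=
        (Real.le_sqrt (norm_nonneg _) (by positivity)).2 (by nlinarith)
    _ ≤ √(‖e a‖ ^ 2 + ε ^ 2) + ∫ t in a..x, c t :=
        sqrt_norm_sq_add_sq_le_of_re_inner_deriv_le hε he he' hc hc0 bound x hx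
    _ ≤ ‖e a‖ + ε + ∫ t in a..x, c t := by
        gcongr
        exact Real.sqrt_le_iff.2 ⟨by positivity, by nlinarith [norm_nonneg (e a)]⟩
    _ = ‖e a‖ + (∫ t in a..x, c t) + ε := by ring

section SelfAdjoint

variable [CompleteSpace E]

theorem IsSelfAdjoint.re_inner_neg_I_smul_apply_self {A : E →L[ℂ] E} (hA : IsSelfAdjoint A)
    (x : E) : (⟪x, -I • A x⟫_ℂ).re = 0 := by
  simpa [inner_smul_right] using hA.isSymmetric.im_inner_self_apply x

theorem IsSelfAdjoint.re_inner_sub_neg_I_smul_le {A : E →L[ℂ] E} (hA : IsSelfAdjoint A)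
    (B : E →L[ℂ] E) (x y : E) :
    (⟪x - y, -I • A x - -I • (A + B) y⟫_ℂ).re ≤ ‖x - y‖ * (‖B‖ * ‖y‖) := by
  have hsplit : -I • A x - -I • (A + B) y = -I • A (x - y) + I • B y := by
    simp only [map_sub, add_apply, smul_sub, smul_add, neg_smul]
    abel
  rw [hsplit, inner_add_right, add_re, hA.re_inner_neg_I_smul_apply_self, zero_add]
  calc (⟪x - y, I • B y⟫_ℂ).re ≤ ‖x - y‖ * ‖I • B y‖ := re_inner_le_norm (𝕜 := ℂ) _ _
    _ ≤ ‖x - y‖ * (‖B‖ * ‖y‖) := by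
        rw [norm_smul, norm_I, one_mul]
        gcongr
        exact B.le_opNorm y

def SolvesSchrodinger (A : ℝ → E →L[ℂ] E) (χ : ℝ → E) (s : Set ℝ) : Prop :=
  ∀ t ∈ s, HasDerivAt χ (-I • A t (χ t)) t

theorem SolvesSchrodinger.norm_eq {A : ℝ → E →L[ℂ] E} (hA : ∀ t, IsSelfAdjoint (A t))
    {χ : ℝ → E} {a b : ℝ} (hχ : SolvesSchrodinger A χ (Icc a b)) :
    ∀ t ∈ Icc a b, ‖χ t‖ = ‖χ a‖ := by
  have hsq : ∀ t ∈ Icc a b, ‖χ t‖ ^ 2 = ‖χ a‖ ^ 2 :=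
    constant_of_has_deriv_right_zero
      (fun t ht => ((hχ t ht).continuousAt.norm.pow 2).continuousWithinAt)
      fun t ht => by
        simpa only [(hA t).re_inner_neg_I_smul_apply_self, mul_zero] using
          (hχ t (Ico_subset_Icc_self ht)).hasDerivWithinAt.norm_sq_complex
  exact fun t ht => (pow_left_inj₀ (norm_nonneg _) (norm_nonneg _) two_ne_zero).1 (hsq t ht)

theorem SolvesSchrodinger.norm_sub_le_integral {Hop V : ℝ → E →L[ℂ] E}
    (hH : ∀ t, IsSelfAdjoint (Hop t)) (hV : ∀ t, IsSelfAdjoint (V t)) (hVc : Continuous V)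
    {ψ φ : ℝ → E} {a b : ℝ} (hab : a ≤ b) (hψ : SolvesSchrodinger Hop ψ (Icc a b))
    (hφ : SolvesSchrodinger (Hop + V) φ (Icc a b)) (h0 : ψ a = φ a) :
    ‖ψ b - φ b‖ ≤ ‖φ a‖ * ∫ t in a..b, ‖V t‖ := by
  have hφn := hφ.norm_eq fun t => (hH t).add (hV t)
  have key := norm_le_add_integral_of_re_inner_deriv_le (e := ψ - φ)
    (e' := fun t => -I • Hop t (ψ t) - -I • (Hop t + V t) (φ t)) (c := fun t => ‖V t‖ * ‖φ a‖)
    (fun t ht => ((hψ t ht).continuousAt.sub (hφ t ht).continuousAt).continuousWithinAt)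
    (fun t ht => ((hψ t (Ico_subset_Icc_self ht)).sub
      (hφ t (Ico_subset_Icc_self ht))).hasDerivWithinAt)
    (hVc.norm.mul continuous_const) (fun t _ => by positivity)
    (fun t ht => by
      rw [mul_comm, ← hφn t (Ico_subset_Icc_self ht)]
      exact (hH t).re_inner_sub_neg_I_smul_le (V t) (ψ t) (φ t))
    b ⟨hab, le_rfl⟩
  simpa [h0, intervalIntegral.integral_mul_const, mul_comm] using key

end SelfAdjoint

end

theorem overlap_final_states_pos_general
    {H : Type*} [NormedAddCommGroup H] [InnerProductSpace ℂ H] [CompleteSpace H]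
    (T : ℝ) (hT : 0 < T)
    (Hop V : ℝ → (H →L[ℂ] H))
    (hVcont : Continuous V)
    (hHsa : ∀ t, IsSelfAdjoint (Hop t)) (hVsa : ∀ t, IsSelfAdjoint (V t))
    (v : ℝ) (hv : v = ∫ t in (0 : ℝ)..T, ‖V t‖) (hvlt : v < Real.sqrt 2)
    (ψ φ : ℝ → H)
    (hψ : ∀ t ∈ Set.Icc (0 : ℝ) T, HasDerivAt ψ ((-Complex.I) • (Hop t) (ψ t)) t)
    (hφ : ∀ t ∈ Set.Icc (0 : ℝ) T, HasDerivAt φ ((-Complex.I) • ((Hop t + V t) (φ t))) t)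
    (h0 : ψ 0 = φ 0) (hnorm : ‖ψ 0‖ = 1) :
    (inner ℂ (ψ T) (φ T) : ℂ).re ≥ 1 - v ^ 2 / 2 ∧ 1 - v ^ 2 / 2 > 0 := by
  have hψ : SolvesSchrodinger Hop ψ (Icc 0 T) := hψ
  have hφ : SolvesSchrodinger (Hop + V) φ (Icc 0 T) := hφ
  have hTmem : T ∈ Icc 0 T := ⟨hT.le, le_rfl⟩
  have hφ0 : ‖φ 0‖ = 1 := h0 ▸ hnorm
  have hψT : ‖ψ T‖ = 1 := (hψ.norm_eq hHsa T hTmem).trans hnorm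
  have hφT : ‖φ T‖ = 1 := (hφ.norm_eq (fun t => (hHsa t).add (hVsa t)) T hTmem).trans hφ0
  have herr : ‖ψ T - φ T‖ ≤ v := by
    simpa [hφ0, ← hv] using hψ.norm_sub_le_integral hHsa hVsa hVcont hT.le hφ h0
  have hoverlap : (⟪ψ T, φ T⟫_ℂ).re = 1 - ‖ψ T - φ T‖ ^ 2 / 2 := by
    rw [norm_sub_sq (𝕜 := ℂ), hψT, hφT, RCLike.re_to_complex]
    ring
  have hv0 : 0 ≤ v := (norm_nonneg _).trans herr
  have hvsq : v ^ 2 < 2 := by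
    simpa [Real.sq_sqrt] using pow_lt_pow_left₀ hvlt hv0 two_ne_zero
  constructor
  · rw [hoverlap]
    nlinarith [norm_nonneg (ψ T - φ T)]
  · linarith

/-- Eq. (12) of the paper: if the integrated error strength
`v = ∫₀ᵀ ‖V(t)‖ dt` is less than `√2`, then the final states have non-zero
overlap: `Re ⟨ψ(T), φ(T)⟩ ≥ 1 - v²/2 > 0`. -/
theorem overlap_final_states_pos
    {H : Type*} [NormedAddCommGroup H] [InnerProductSpace ℂ H] [CompleteSpace H]
    (T : ℝ) (hT : 0 < T)
    (Hop V : ℝ → (H →L[ℂ] H))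
    (hHcont : Continuous Hop) (hVcont : Continuous V)
    (hHsa : ∀ t, IsSelfAdjoint (Hop t)) (hVsa : ∀ t, IsSelfAdjoint (V t))
    (v : ℝ) (hv : v = ∫ t in (0 : ℝ)..T, ‖V t‖) (hvlt : v < Real.sqrt 2)
    (ψ φ : ℝ → H)
    (hψ : ∀ t ∈ Set.Icc (0 : ℝ) T, HasDerivAt ψ ((-Complex.I) • (Hop t) (ψ t)) t)
    (hφ : ∀ t ∈ Set.Icc (0 : ℝ) T, HasDerivAt φ ((-Complex.I) • ((Hop t + V t) (φ t))) t)
    (h0 : ψ 0 = φ 0) (hnorm : ‖ψ 0‖ = 1) :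
    (inner ℂ (ψ T) (φ T) : ℂ).re ≥ 1 - v ^ 2 / 2 ∧ 1 - v ^ 2 / 2 > 0 :=
  overlap_final_states_pos_general T hT Hop V hVcont hHsa hVsa v hv hvlt ψ φ hψ hφ h0 hnorm
end
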